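/- Let n, k ∈ ℕ, let H1, H2 be graphs on [n], let μ* be a permutation of [n], and let μ be a k-core matching of (H1,H2). Then there exists a μ*-maximal matching μ′ extending μ (i.e., dom(μ) ⊆ dom(μ′) and μ′ agrees with μ on dom(μ)) that is a weak k-core matching of (H1,H2) with respect to μ*. -/

import Mathlib

/-! Extend `μ` by `μ*` on every vertex `i` for which neither `i` nor `μ* i` is covered yet.
The extension is injective and `μ*`-maximal, and it matches every new vertex correctly, so the
mismatched vertices are exactly those of `μ`. The intersection graph only grows under extension,
so each mismatched vertex keeps degree at least `k`. -/

open MeasureTheory ProbabilityTheory Filter Set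
open scoped ENNReal Classical Topology

namespace Paper

/-- Index type of potential edges of a graph on `[n] = Fin n`. -/
abbrev EdgeIdx (n : ℕ) := {e : Sym2 (Fin n) // ¬ e.IsDiag}

/-- A graph on `[n]`, given by its edge indicators. -/
abbrev Graph (n : ℕ) := EdgeIdx n → Bool

instance (n : ℕ) : MeasurableSpace (Finset (Fin n)) := ⊤
instance (n : ℕ) : MeasurableSpace (Equiv.Perm (Fin n)) := ⊤

/-- Bernoulli measure on `Bool` with success probability `q` (clamped into `[0,1]`). -/
noncomputable def bern (q : ℝ) : Measure Bool :=
  (PMF.bernoulli (min (Real.toNNReal q) 1) (min_le_right _ _)).toMeasure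

/-- i.i.d. Bernoulli(q) edge indicators: the Erdős–Rényi measure on graphs on `[n]`. -/
noncomputable def erMeasure (n : ℕ) (q : ℝ) : Measure (Graph n) :=
  Measure.pi fun _ : EdgeIdx n => bern q

/-- Uniform probability measure on a finite set. -/
noncomputable def uniformFinset {α : Type*} [MeasurableSpace α] (t : Finset α) : Measure α :=
  (t.card : ℝ≥0∞)⁻¹ • ∑ a ∈ t, Measure.dirac a

/-- The uniform random permutation of `[n]`. -/
noncomputable def uniformPerm (n : ℕ) : Measure (Equiv.Perm (Fin n)) :=
  uniformFinset Finset.univ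

/-- The uniform random subset of `[n]` of size `m`. -/
noncomputable def uniformSized (n m : ℕ) : Measure (Finset (Fin n)) :=
  uniformFinset ((Finset.univ : Finset (Finset (Fin n))).filter fun S => S.card = m)

lemma not_isDiag_map {n : ℕ} (π : Equiv.Perm (Fin n)) {e : Sym2 (Fin n)} (h : ¬ e.IsDiag) :
    ¬ (e.map π).IsDiag := by
  induction e using Sym2.ind with
  | _ x y =>
    simp only [Sym2.map_pair_eq, Sym2.mk_isDiag_iff] at h ⊢
    exact fun hxy => h (π.injective hxy)

/-- Action of a permutation on (indices of) potential edges. -/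
def edgeMap {n : ℕ} (π : Equiv.Perm (Fin n)) (e : EdgeIdx n) : EdgeIdx n :=
  ⟨e.1.map π, not_isDiag_map π e.2⟩

/-- `{i,j}` is an edge of `G`. -/
def adjB {n : ℕ} (G : Graph n) (i j : Fin n) : Bool :=
  if h : i = j then false else G ⟨s(i, j), by simpa [Sym2.mk_isDiag_iff] using h⟩

/-- The potential edge `e` has an endpoint in `B`. -/
def touches {n : ℕ} (B : Finset (Fin n)) (e : EdgeIdx n) : Prop := ∃ i ∈ B, i ∈ e.1

/-- Replace the edge status of every pair touching `B` by the fresh values `F`. -/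
noncomputable def corrupt {n : ℕ} (B : Finset (Fin n)) (G F : Graph n) : Graph n :=
  fun e => if touches B e then F e else G e

/-- A matching: an injective map from a subset of `[n]` into `[n]`. -/
structure Matching (n : ℕ) where
  dom : Finset (Fin n)
  f : Fin n → Fin n
  injOn : Set.InjOn f dom

instance (n : ℕ) : MeasurableSpace (Matching n) := ⊤

/-- The overlap of a matching with a permutation: the number of correctly matched nodes. -/
def ov {n : ℕ} (μ : Matching n) (π : Equiv.Perm (Fin n)) : ℕ :=
  (μ.dom.filter fun i => μ.f i = π i).card

/-- The output tuple `(B1, B2, G̃1, G̃2, π*)` of a corruption model. -/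
structure Out (n : ℕ) where
  B1 : Finset (Fin n)
  B2 : Finset (Fin n)
  Gt1 : Graph n
  Gt2 : Graph n
  prm : Equiv.Perm (Fin n)

instance (n : ℕ) : MeasurableSpace (Out n) := ⊤

/-- Underlying sample space for the WCG model:
parent graph, two subsampling masks, two fresh-resampling graphs, π*, B1, B2. -/
abbrev WCGSpace (n : ℕ) :=
  Graph n × Graph n × Graph n × Graph n × Graph n ×
    Equiv.Perm (Fin n) × Finset (Fin n) × Finset (Fin n)

noncomputable def wcgBase (n : ℕ) (p s : ℝ) (a b : ℕ) : Measure (WCGSpace n) :=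
  (erMeasure n p).prod ((erMeasure n s).prod ((erMeasure n s).prod
    ((erMeasure n (p * s)).prod ((erMeasure n (p * s)).prod
      ((uniformPerm n).prod ((uniformSized n a).prod (uniformSized n b)))))))

noncomputable def wcgBuild (n : ℕ) (ω : WCGSpace n) : Out n :=
  { B1 := ω.2.2.2.2.2.2.1
    B2 := ω.2.2.2.2.2.2.2
    Gt1 := corrupt ω.2.2.2.2.2.2.1 (fun e => ω.1 e && ω.2.1 e) ω.2.2.2.1
    Gt2 := corrupt ω.2.2.2.2.2.2.2
      (fun e => ω.1 (edgeMap ω.2.2.2.2.2.1⁻¹ e) && ω.2.2.1 (edgeMap ω.2.2.2.2.2.1⁻¹ e))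
      ω.2.2.2.2.1
    prm := ω.2.2.2.2.2.1 }

/-- The weakly corrupted graphs model `WCG(n,p,s,γ,λ)`, where `a = λγn` and `b = (1-λ)γn`:
the joint law of `(B1, B2, G̃1, G̃2, π*)`. -/
noncomputable def WCG (n : ℕ) (p s : ℝ) (a b : ℕ) : Measure (Out n) :=
  (wcgBase n p s a b).map (wcgBuild n)

/-- The output tuple `(G1, G2, π*)` of the correlated Erdős–Rényi model. -/
structure CEROut (n : ℕ) where
  G1 : Graph n
  G2 : Graph n
  prm : Equiv.Perm (Fin n)

instance (n : ℕ) : MeasurableSpace (CEROut n) := ⊤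

abbrev CERSpace (n : ℕ) := Graph n × Graph n × Graph n × Equiv.Perm (Fin n)

noncomputable def cerBuild (n : ℕ) (ω : CERSpace n) : CEROut n :=
  { G1 := fun e => ω.1 e && ω.2.1 e
    G2 := fun e => ω.1 (edgeMap ω.2.2.2⁻¹ e) && ω.2.2.1 (edgeMap ω.2.2.2⁻¹ e)
    prm := ω.2.2.2 }

/-- The correlated Erdős–Rényi model `CER(n,p,s)`: the joint law of `(G1, G2, π*)`. -/
noncomputable def CER (n : ℕ) (p s : ℝ) : Measure (CEROut n) :=
  (cerBase n p s).map (cerBuild n)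
  where cerBase (n : ℕ) (p s : ℝ) : Measure (CERSpace n) :=
    (erMeasure n p).prod ((erMeasure n s).prod ((erMeasure n s).prod (uniformPerm n)))

/-- A strong adversary with auxiliary randomness in `U`: any rule producing, from `(G1,G2,π*)`
and an auxiliary sample, sets `B1`, `B2` of prescribed sizes and corrupted graphs agreeing
with `G1` (resp. `G2`) on every pair not touching `B1` (resp. `B2`). -/
structure Adversary (n a b : ℕ) (U : Type) where
  act : CEROut n → U → Out n
  prm_eq : ∀ ω u, (act ω u).prm = ω.prm
  cardB1 : ∀ ω u, (act ω u).B1.card = a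
  cardB2 : ∀ ω u, (act ω u).B2.card = b
  agree1 : ∀ ω u (e : EdgeIdx n), ¬ touches (act ω u).B1 e → (act ω u).Gt1 e = ω.G1 e
  agree2 : ∀ ω u (e : EdgeIdx n), ¬ touches (act ω u).B2 e → (act ω u).Gt2 e = ω.G2 e

/-- The strongly corrupted graphs model `SCG(n,p,s,γ,λ,A)`:
the joint law of `(B1, B2, G̃1, G̃2, π*)`. -/
noncomputable def SCG (n : ℕ) (p s : ℝ) {a b : ℕ} {U : Type} [MeasurableSpace U]
    (ν : Measure U) (A : Adversary n a b U) : Measure (Out n) :=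
  ((CER n p s).prod ν).map fun ω => A.act ω.1 ω.2

/-- Degree of `i` in the intersection graph `H1 ∧_μ H2`. -/
def interDeg {n : ℕ} (H1 H2 : Graph n) (μ : Matching n) (i : Fin n) : ℕ :=
  (μ.dom.filter fun j => adjB H1 i j ∧ adjB H2 (μ.f i) (μ.f j)).card

/-- Number of edges of the intersection graph `H1 ∧_μ H2`. -/
def interCount {n : ℕ} (H1 H2 : Graph n) (μ : Matching n) : ℕ :=
  ((μ.dom ×ˢ μ.dom).filter fun q =>
    q.1 < q.2 ∧ adjB H1 q.1 q.2 ∧ adjB H2 (μ.f q.1) (μ.f q.2)).card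

/-- `μ` is a `k`-core matching of `(H1,H2)`: min degree of `H1 ∧_μ H2` is at least `k`. -/
def IsKCoreMatching {n : ℕ} (k : ℕ) (H1 H2 : Graph n) (μ : Matching n) : Prop :=
  ∀ i ∈ μ.dom, k ≤ interDeg H1 H2 μ i

/-- `E` is a `k`-core estimator: it always outputs a `k`-core matching of maximal domain size. -/
def IsKCoreEstimator {n : ℕ} (k : ℕ) (E : Graph n × Graph n → Matching n) : Prop :=
  ∀ x : Graph n × Graph n, IsKCoreMatching k x.1 x.2 (E x) ∧
    ∀ μ : Matching n, IsKCoreMatching k x.1 x.2 μ → μ.dom.card ≤ (E x).dom.card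

/-- `E` is a maximum overlap estimator: its output maximizes the number of edges of the
intersection graph. -/
def IsMaxOverlapEstimator {n : ℕ} (E : Graph n × Graph n → Matching n) : Prop :=
  ∀ x : Graph n × Graph n, ∀ μ : Matching n, interCount x.1 x.2 μ ≤ interCount x.1 x.2 (E x)

/-- `X(π)`: the number of pairs `{i,j}` with `{i,j} ∈ E(G1)` and `{π i, π j} ∈ E(G2)`. -/
def Xcount {n : ℕ} (G1 G2 : Graph n) (π : Equiv.Perm (Fin n)) : ℕ :=
  (Finset.univ.filter fun e : EdgeIdx n => G1 e ∧ G2 (edgeMap π e)).card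

/-- The intersection graph `H1 ∧_π H2` (full vertex set, `π` a permutation). -/
def interGraph {n : ℕ} (H1 H2 : Graph n) (π : Equiv.Perm (Fin n)) : Graph n :=
  fun e => H1 e && H2 (edgeMap π e)

/-- Degree of `i` into the set `A` in the graph `G`. -/
def degInSet {n : ℕ} (G : Graph n) (A : Finset (Fin n)) (i : Fin n) : ℕ :=
  (A.filter fun j => adjB G i j).card

/-- Degree of `i` in the graph `G`. -/
def degFull {n : ℕ} (G : Graph n) (i : Fin n) : ℕ := degInSet G Finset.univ i

/-- `A` induces a subgraph of `G` of minimum degree at least `k`. -/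
def IsCoreSet {n : ℕ} (G : Graph n) (k : ℕ) (A : Finset (Fin n)) : Prop :=
  ∀ i ∈ A, k ≤ degInSet G A i

/-- The `k`-core of `G`: the largest vertex set inducing a subgraph of min degree `≥ k`
(equals the union of all such sets). -/
noncomputable def coreK {n : ℕ} (G : Graph n) (k : ℕ) : Finset (Fin n) :=
  ((Finset.univ : Finset (Finset (Fin n))).filter fun A => IsCoreSet G k A).sup id

namespace Matching

variable {n : ℕ}

def freePairs (μ : Matching n) (π : Equiv.Perm (Fin n)) : Finset (Fin n) :=
  Finset.univ.filter fun i => i ∉ μ.dom ∧ π i ∉ μ.dom.image μ.f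

lemma mem_freePairs {μ : Matching n} {π : Equiv.Perm (Fin n)} {i : Fin n} :
    i ∈ μ.freePairs π ↔ i ∉ μ.dom ∧ π i ∉ μ.dom.image μ.f := by
  simp [freePairs]

lemma injOn_extendBy (μ : Matching n) (π : Equiv.Perm (Fin n)) :
    Set.InjOn (fun i => if i ∈ μ.dom then μ.f i else π i) ↑(μ.dom ∪ μ.freePairs π) := by
  have hcross : ∀ i j, i ∈ μ.dom → j ∈ μ.freePairs π → μ.f i ≠ π j := fun i j hi hj h =>
    (mem_freePairs.1 hj).2 (Finset.mem_image.2 ⟨i, hi, h⟩)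
  intro i hi j hj hij
  simp only [Finset.coe_union, Set.mem_union, Finset.mem_coe] at hi hj
  by_cases hi' : i ∈ μ.dom <;> by_cases hj' : j ∈ μ.dom <;> simp only [hi', hj', if_true,
    if_false] at hij
  · exact μ.injOn hi' hj' hij
  · exact absurd hij (hcross i j hi' (hj.resolve_left hj'))
  · exact absurd hij.symm (hcross j i hj' (hi.resolve_left hi'))
  · exact π.injective hij

def extendBy (μ : Matching n) (π : Equiv.Perm (Fin n)) : Matching n where
  dom := μ.dom ∪ μ.freePairs π
  f i := if i ∈ μ.dom then μ.f i else π i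
  injOn := injOn_extendBy μ π

lemma dom_subset_extendBy (μ : Matching n) (π : Equiv.Perm (Fin n)) :
    μ.dom ⊆ (μ.extendBy π).dom :=
  Finset.subset_union_left

lemma extendBy_f_of_mem {μ : Matching n} (π : Equiv.Perm (Fin n)) {i : Fin n}
    (hi : i ∈ μ.dom) : (μ.extendBy π).f i = μ.f i :=
  if_pos hi

lemma extendBy_f_of_notMem {μ : Matching n} (π : Equiv.Perm (Fin n)) {i : Fin n}
    (hi : i ∉ μ.dom) : (μ.extendBy π).f i = π i :=
  if_neg hi

lemma extendBy_covers (μ : Matching n) (π : Equiv.Perm (Fin n)) (i : Fin n) :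
    i ∈ (μ.extendBy π).dom ∨ π i ∈ (μ.extendBy π).dom.image (μ.extendBy π).f := by
  by_cases hfree : i ∈ μ.freePairs π
  · exact Or.inl (Finset.mem_union_right _ hfree)
  by_cases hi : i ∈ μ.dom
  · exact Or.inl (dom_subset_extendBy μ π hi)
  obtain ⟨j, hj, hji⟩ := Finset.mem_image.1 (not_not.1 fun h => hfree (mem_freePairs.2 ⟨hi, h⟩))
  refine Or.inr (Finset.mem_image.2 ⟨j, dom_subset_extendBy μ π hj, ?_⟩)
  rw [extendBy_f_of_mem π hj, hji]

lemma filter_extendBy_ne (μ : Matching n) (π : Equiv.Perm (Fin n)) :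
    (μ.extendBy π).dom.filter (fun i => (μ.extendBy π).f i ≠ π i) =
      μ.dom.filter fun i => μ.f i ≠ π i := by
  ext i
  by_cases hi : i ∈ μ.dom
  · simp [extendBy_f_of_mem π hi, dom_subset_extendBy μ π hi, hi]
  · simp [extendBy_f_of_notMem π hi, hi]

end Matching

lemma interDeg_le_of_extends {n : ℕ} {H1 H2 : Graph n} {μ μ' : Matching n}
    (hdom : μ.dom ⊆ μ'.dom) (hf : ∀ i ∈ μ.dom, μ'.f i = μ.f i) {i : Fin n} (hi : i ∈ μ.dom) :
    interDeg H1 H2 μ i ≤ interDeg H1 H2 μ' i := by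
  refine Finset.card_le_card fun j hj => ?_
  rw [Finset.mem_filter] at hj ⊢
  exact ⟨hdom hj.1, by rw [hf i hi, hf j hj.1]; exact hj.2⟩

/-- every k-core matching extends to a μ*-maximal matching that is a weak
k-core matching with respect to μ*. -/
theorem stmt11 (n k : ℕ) (H1 H2 : Graph n) (mustar : Equiv.Perm (Fin n)) (μ : Matching n)
    (hμ : IsKCoreMatching k H1 H2 μ) :
    ∃ μ' : Matching n,
      μ.dom ⊆ μ'.dom ∧ (∀ i ∈ μ.dom, μ'.f i = μ.f i) ∧
      (∀ i : Fin n, i ∈ μ'.dom ∨ mustar i ∈ μ'.dom.image μ'.f) ∧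
      k * (μ'.dom.filter fun i => μ'.f i ≠ mustar i).card ≤
        ∑ i ∈ μ'.dom.filter (fun i => μ'.f i ≠ mustar i), interDeg H1 H2 μ' i := by
  have hdom := μ.dom_subset_extendBy mustar
  have hf : ∀ i ∈ μ.dom, (μ.extendBy mustar).f i = μ.f i := fun i hi =>
    Matching.extendBy_f_of_mem mustar hi
  refine ⟨μ.extendBy mustar, hdom, hf, μ.extendBy_covers mustar, ?_⟩
  rw [Matching.filter_extendBy_ne, mul_comm, ← smul_eq_mul]
  refine Finset.card_nsmul_le_sum _ _ _ fun i hi => ?_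
  have hi : i ∈ μ.dom := (Finset.mem_filter.1 hi).1
  exact (hμ i hi).trans (interDeg_le_of_extends hdom hf hi)

end Paper
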